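/- arXiv:1906.00620 — 3 statements merged into one kernel-verified Lean document; each statement's English description precedes it below -/
import Mathlib

section
/- Let k ≥ r ≥ 2 be integers and set T = 3^(k-r+1). Let S = (P, B) be a Steiner triple system on 3^k points admitting a (k,r)-decomposition, i.e. a partition of P into 3^(r-1) groups G_x of size T indexed by the vectors x of (ZMod 3)^(r-1). Suppose that (a) for every group G_x, the sub-Steiner triple system on G_x formed by the blocks contained in G_x is resolvable, and (b) for every line {x,y,z} of AG(r-1,3), the Latin square of order T defined by the transversal design whose blocks are the blocks of B meeting all three of G_x, G_y, G_z has an orthogonal mate. Then S is resolvable; in particular B can be partitioned into (3^k − 1)/2 parallel classes. -/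
/-!
Inside each group, the given resolution of the sub-STS has `(T - 1) / 2` classes; taking the
`i`-th class of every group gives a parallel class of the whole design. For a line `{x, y, z}`
of `AG(r - 1, 3)`, an orthogonal mate `M` of the Latin square `L` of the transversal design splits
its blocks into `T` parallel classes of `G x ∪ G y ∪ G z`: the `m`-th consists of the blocks at
the cells where `M` takes the value `m`. The lines of one direction (a point of the projective
space `ℙ (ZMod 3) (Fin (r - 1) → ZMod 3)`) partition the affine space, so gluing their `m`-th
classes gives `T` parallel classes of the design per direction. A block lies in one group or
meets the groups of exactly one line, so these classes partition `B`; the number of classes,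
`(3 ^ k - 1) / 2`, is forced by `6 |B| = v (v - 1)` and `3 |C| = v`.
-/

/-- A Steiner triple system on the point type `P`: a collection of 3-element
subsets (blocks) such that every pair of distinct points lies in exactly one block. -/
def IsSTS {P : Type*} [DecidableEq P] (B : Finset (Finset P)) : Prop :=
  (∀ b ∈ B, b.card = 3) ∧
  ∀ p q : P, p ≠ q → ∃! b, b ∈ B ∧ p ∈ b ∧ q ∈ b

/-- A Steiner triple system on the point set `s ⊆ P`. -/
def IsSTSOn {P : Type*} [DecidableEq P] (s : Finset P) (B : Finset (Finset P)) : Prop :=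
  (∀ b ∈ B, b ⊆ s ∧ b.card = 3) ∧
  ∀ p ∈ s, ∀ q ∈ s, p ≠ q → ∃! b, b ∈ B ∧ p ∈ b ∧ q ∈ b

/-- A parallel class of the point set `s`: pairwise disjoint subsets whose union is `s`. -/
def IsParallelClassOn {P : Type*} [DecidableEq P] (s : Finset P)
    (C : Finset (Finset P)) : Prop :=
  (∀ b ∈ C, ∀ b' ∈ C, b ≠ b' → Disjoint b b') ∧ C.biUnion id = s

/-- A block collection on the point set `s` is resolvable if it can be partitioned into
parallel classes of `s`. -/
def IsResolvableOn {P : Type*} [DecidableEq P] (s : Finset P)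
    (B : Finset (Finset P)) : Prop :=
  ∃ F : Finpartition B, ∀ C ∈ F.parts, IsParallelClassOn s C

/-- A parallel class: a collection of pairwise disjoint subsets whose union is everything. -/
def IsParallelClass {P : Type*} [Fintype P] [DecidableEq P] (C : Finset (Finset P)) : Prop :=
  (∀ b ∈ C, ∀ b' ∈ C, b ≠ b' → Disjoint b b') ∧ C.biUnion id = Finset.univ

/-- A block collection is resolvable if it can be partitioned into parallel classes. -/
def IsResolvable {P : Type*} [Fintype P] [DecidableEq P] (B : Finset (Finset P)) : Prop :=
  ∃ F : Finpartition B, ∀ C ∈ F.parts, IsParallelClass C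

/-- A Latin square of order `n`: each row and each column is a bijection. -/
def IsLatinSquare {n : ℕ} (L : Fin n → Fin n → Fin n) : Prop :=
  (∀ i, Function.Bijective fun j => L i j) ∧ (∀ j, Function.Bijective fun i => L i j)

/-- Two Latin squares are orthogonal if superimposing them yields all ordered
pairs without repetition. -/
def AreOrthogonal {n : ℕ} (L M : Fin n → Fin n → Fin n) : Prop :=
  Function.Injective fun p : Fin n × Fin n => (L p.1 p.2, M p.1 p.2)

open Finset Function
open scoped LinearAlgebra.Projectivization

section Resolution

variable {P : Type*} [DecidableEq P]

lemma IsSTSOn.offDiag_eq_biUnion {s : Finset P} {B : Finset (Finset P)} (h : IsSTSOn s B) :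
    s.offDiag = B.biUnion offDiag := by
  ext ⟨p, q⟩
  simp only [mem_offDiag, mem_biUnion]
  constructor
  · rintro ⟨hp, hq, hpq⟩
    obtain ⟨b, ⟨hb, hpb, hqb⟩, -⟩ := h.2 p hp q hq hpq
    exact ⟨b, hb, hpb, hqb, hpq⟩
  · rintro ⟨b, hb, hpb, hqb, hpq⟩
    exact ⟨(h.1 b hb).1 hpb, (h.1 b hb).1 hqb, hpq⟩

lemma IsSTSOn.six_mul_card {s : Finset P} {B : Finset (Finset P)} (h : IsSTSOn s B) :
    6 * #B = #s * (#s - 1) := by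
  have hdisj : (B : Set (Finset P)).PairwiseDisjoint offDiag := by
    intro b hb b' hb' hne
    refine disjoint_left.mpr fun ⟨p, q⟩ hpq hpq' => hne ?_
    rw [mem_offDiag] at hpq hpq'
    exact (h.2 p ((h.1 b hb).1 hpq.1) q ((h.1 b hb).1 hpq.2.1) hpq.2.2).unique
      ⟨hb, hpq.1, hpq.2.1⟩ ⟨hb', hpq'.1, hpq'.2.1⟩
  have hcard := congrArg card h.offDiag_eq_biUnion
  rw [card_biUnion hdisj, offDiag_card, sum_congr rfl fun b hb => by
    rw [offDiag_card, (h.1 b hb).2]] at hcard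
  simp only [sum_const, smul_eq_mul] at hcard
  rw [Nat.mul_sub_one]
  omega

lemma IsParallelClassOn.subset_of_mem {s b : Finset P} {C : Finset (Finset P)}
    (h : IsParallelClassOn s C) (hb : b ∈ C) : b ⊆ s :=
  h.2 ▸ subset_biUnion_of_mem id hb

lemma IsParallelClassOn.three_mul_card {s : Finset P} {C : Finset (Finset P)}
    (h : IsParallelClassOn s C) (h3 : ∀ b ∈ C, #b = 3) : 3 * #C = #s := by
  rw [← h.2, card_biUnion (t := id) h.1, sum_congr rfl (f := fun b => #(id b)) (g := fun _ => 3) h3,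
    sum_const, smul_eq_mul, mul_comm]

lemma IsSTSOn.two_mul_card_parts {s : Finset P} {B : Finset (Finset P)} (h : IsSTSOn s B)
    (hs : s.Nonempty) (F : Finpartition B) (hF : ∀ C ∈ F.parts, IsParallelClassOn s C) :
    2 * #F.parts = #s - 1 := by
  have h3 : 3 * #B = #F.parts * #s := by
    rw [← F.sum_card_parts, mul_sum, sum_congr rfl fun C hC =>
      (hF C hC).three_mul_card fun b hb => (h.1 b (F.le hC hb)).2, sum_const, smul_eq_mul]
  refine Nat.eq_of_mul_eq_mul_left hs.card_pos ?_
  rw [← h.six_mul_card]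
  linarith

lemma IsSTS.two_mul_card_parts [Fintype P] [Nonempty P] {B : Finset (Finset P)} (hB : IsSTS B)
    (F : Finpartition B) (hF : ∀ C ∈ F.parts, IsParallelClass C) :
    2 * #F.parts = Fintype.card P - 1 := by
  have hSTS : IsSTSOn univ B := ⟨fun b hb => ⟨subset_univ b, hB.1 b hb⟩, fun p _ q _ => hB.2 p q⟩
  rw [← card_univ]
  exact hSTS.two_mul_card_parts univ_nonempty F hF

-- Unlike a `Finpartition`, the classes are indexed, so that the `i`-th classes of resolutions of
-- disjoint pieces can be glued together.
structure IsResolutionOn {ι : Type*} (s : Finset P) (B : Finset (Finset P))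
    (R : ι → Finset (Finset P)) : Prop where
  isParallelClassOn : ∀ i, IsParallelClassOn s (R i)
  pairwise_disjoint : Pairwise (Disjoint on R)
  mem_iff : ∀ b, b ∈ B ↔ ∃ i, b ∈ R i

namespace IsResolutionOn

variable {ι : Type*} {s : Finset P} {B : Finset (Finset P)} {R : ι → Finset (Finset P)}

lemma subset (h : IsResolutionOn s B R) (i : ι) : R i ⊆ B :=
  fun b hb => (h.mem_iff b).2 ⟨i, hb⟩

lemma subset_of_mem (h : IsResolutionOn s B R) {b : Finset P} (hb : b ∈ B) : b ⊆ s := by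
  obtain ⟨i, hi⟩ := (h.mem_iff b).1 hb
  exact (h.isParallelClassOn i).subset_of_mem hi

lemma biUnion {κ : Type*} [Fintype κ] {s : κ → Finset P} {B : κ → Finset (Finset P)}
    {R : κ → ι → Finset (Finset P)} (hs : Pairwise (Disjoint on s))
    (hne : ∀ a, ∀ b ∈ B a, b.Nonempty) (h : ∀ a, IsResolutionOn (s a) (B a) (R a)) :
    IsResolutionOn (univ.biUnion s) (univ.biUnion B) fun i => univ.biUnion fun a => R a i where
  isParallelClassOn i := by
    refine ⟨?_, ?_⟩
    · simp only [mem_biUnion, mem_univ, true_and]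
      rintro b ⟨a, hb⟩ b' ⟨a', hb'⟩ hbb'
      obtain rfl | haa := eq_or_ne a a'
      · exact ((h a).isParallelClassOn i).1 b hb b' hb' hbb'
      · exact (hs haa).mono ((h a).isParallelClassOn i |>.subset_of_mem hb)
          ((h a').isParallelClassOn i |>.subset_of_mem hb')
    · rw [biUnion_biUnion]
      exact biUnion_congr rfl fun a _ => ((h a).isParallelClassOn i).2
  pairwise_disjoint i j hij := by
    simp only [onFun, disjoint_left, mem_biUnion, mem_univ, true_and]
    rintro b ⟨a, hb⟩ ⟨a', hb'⟩
    obtain rfl | haa := eq_or_ne a a'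
    · exact disjoint_left.1 ((h a).pairwise_disjoint hij) hb hb'
    · obtain ⟨p, hp⟩ := hne a b (((h a).mem_iff b).2 ⟨i, hb⟩)
      exact disjoint_left.1 (hs haa) ((h a).isParallelClassOn i |>.subset_of_mem hb hp)
        ((h a').isParallelClassOn j |>.subset_of_mem hb' hp)
  mem_iff b := by
    simp only [mem_biUnion, mem_univ, true_and, (h _).mem_iff]
    exact exists_comm

lemma sum {ι' : Type*} {B' : Finset (Finset P)} {R' : ι' → Finset (Finset P)}
    (h : IsResolutionOn s B R) (h' : IsResolutionOn s B' R') (hBB' : Disjoint B B') :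
    IsResolutionOn s (B ∪ B') (Sum.elim R R') where
  isParallelClassOn := by
    rintro (i | i)
    exacts [h.isParallelClassOn i, h'.isParallelClassOn i]
  pairwise_disjoint := by
    rintro (i | i) (j | j) hij
    · exact h.pairwise_disjoint fun e => hij (congrArg _ e)
    · exact hBB'.mono (h.subset i) (h'.subset j)
    · exact hBB'.symm.mono (h'.subset i) (h.subset j)
    · exact h'.pairwise_disjoint fun e => hij (congrArg _ e)
  mem_iff b := by
    simp only [mem_union, h.mem_iff, h'.mem_iff, Sum.exists, Sum.elim_inl, Sum.elim_inr]

lemma prod {κ : Type*} [Fintype κ] {B : κ → Finset (Finset P)} {R : κ → ι → Finset (Finset P)}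
    (hB : Pairwise (Disjoint on B)) (h : ∀ a, IsResolutionOn s (B a) (R a)) :
    IsResolutionOn s (univ.biUnion B) fun ai : κ × ι => R ai.1 ai.2 where
  isParallelClassOn ai := (h ai.1).isParallelClassOn ai.2
  pairwise_disjoint := by
    rintro ⟨a, i⟩ ⟨a', j⟩ hne
    obtain rfl | haa := eq_or_ne a a'
    · exact (h a).pairwise_disjoint fun e => hne (Prod.ext rfl e)
    · exact (hB haa).mono ((h a).subset i) ((h a').subset j)
  mem_iff b := by
    simp only [mem_biUnion, mem_univ, true_and, (h _).mem_iff, Prod.exists]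

lemma isResolvable [Fintype P] [Fintype ι] (h : IsResolutionOn univ B R) : IsResolvable B := by
  refine ⟨Finpartition.ofErase (univ.image R) ?_ ?_, fun C hC => ?_⟩
  · rw [supIndep_iff_pairwiseDisjoint]
    simp only [coe_image, coe_univ, Set.image_univ]
    rintro _ ⟨i, rfl⟩ _ ⟨j, rfl⟩ hne
    exact h.pairwise_disjoint fun e => hne (by rw [e])
  · ext b
    simp only [mem_sup, mem_image, mem_univ, true_and, id, h.mem_iff]
    constructor
    · rintro ⟨_, ⟨i, rfl⟩, hb⟩
      exact ⟨i, hb⟩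
    · rintro ⟨i, hb⟩
      exact ⟨R i, ⟨i, rfl⟩, hb⟩
  · obtain ⟨i, -, rfl⟩ := mem_image.1 (mem_of_mem_erase hC)
    exact h.isParallelClassOn i

end IsResolutionOn

lemma IsResolvableOn.exists_isResolutionOn {s : Finset P} {B : Finset (Finset P)}
    (hres : IsResolvableOn s B) (hB : IsSTSOn s B) (hs : s.Nonempty) :
    ∃ R : Fin ((#s - 1) / 2) → Finset (Finset P), IsResolutionOn s B R := by
  obtain ⟨F, hF⟩ := hres
  have hcard : #F.parts = (#s - 1) / 2 := by
    have := hB.two_mul_card_parts hs F hF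
    omega
  let e := F.parts.equivFinOfCardEq hcard
  refine ⟨fun i => e.symm i, fun i => hF _ (e.symm i).2, fun i j hij => ?_, fun b => ⟨?_, ?_⟩⟩
  · exact F.disjoint (e.symm i).2 (e.symm j).2 fun h => hij (e.symm.injective (Subtype.ext h))
  · intro hb
    obtain ⟨C, hC, hbC⟩ := F.exists_mem hb
    exact ⟨e ⟨C, hC⟩, by simpa using hbC⟩
  · rintro ⟨i, hi⟩
    exact F.le (e.symm i).2 hi

end Resolution

section TransversalDesign

variable {P : Type*} [DecidableEq P] {X Y Z : Finset P}

lemma eq_of_mem_triple {u p q t : P} (hu : u ∈ ({p, q, t} : Finset P)) (hp : p ∈ X) (hq : q ∈ Y)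
    (ht : t ∈ Z) (hXY : Disjoint X Y) (hXZ : Disjoint X Z) (hYZ : Disjoint Y Z) :
    (u ∈ X → u = p) ∧ (u ∈ Y → u = q) ∧ (u ∈ Z → u = t) := by
  have := disjoint_left.1 hXY
  have := disjoint_left.1 hXZ
  have := disjoint_left.1 hYZ
  simp only [mem_insert, mem_singleton] at hu
  rcases hu with rfl | rfl | rfl <;> grind

lemma exists_eq_triple {b : Finset P} {p q : P} (hXY : Disjoint X Y) (hXZ : Disjoint X Z)
    (hYZ : Disjoint Y Z) (hb : #b = 3) (hp : p ∈ b) (hpX : p ∈ X) (hq : q ∈ b) (hqY : q ∈ Y)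
    (hZ : (b ∩ Z).Nonempty) : ∃ t ∈ Z, b = {p, q, t} := by
  obtain ⟨t, ht⟩ := hZ
  rw [mem_inter] at ht
  refine ⟨t, ht.2, (eq_of_subset_of_card_le ?_ ?_).symm⟩
  · simp only [insert_subset_iff, singleton_subset_iff]
    exact ⟨hp, hq, ht.1⟩
  · rw [hb, card_eq_three.2 ⟨p, q, t, ?_, ?_, ?_, rfl⟩]
    exacts [fun e => disjoint_left.1 hXY hpX (e ▸ hqY),
      fun e => disjoint_left.1 hXZ hpX (e ▸ ht.2), fun e => disjoint_left.1 hYZ hqY (e ▸ ht.2)]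

lemma existsUnique_third_point {B : Finset (Finset P)} (hXY : Disjoint X Y) (hXZ : Disjoint X Z)
    (hYZ : Disjoint Y Z) (hB : ∀ b ∈ B, #b = 3)
    (hTD : ∀ p ∈ X, ∀ q ∈ Y, ∃! b, b ∈ B ∧ (b ∩ X).Nonempty ∧ (b ∩ Y).Nonempty ∧
      (b ∩ Z).Nonempty ∧ p ∈ b ∧ q ∈ b) {p q : P} (hp : p ∈ X) (hq : q ∈ Y) :
    ∃! t : Z, ({p, q, (t : P)} : Finset P) ∈ B := by
  obtain ⟨b, ⟨hb, -, -, hbZ, hpb, hqb⟩, hbuniq⟩ := hTD p hp q hq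
  obtain ⟨t, ht, rfl⟩ := exists_eq_triple hXY hXZ hYZ (hB b hb) hpb hp hqb hq hbZ
  refine ⟨⟨t, ht⟩, hb, fun t' ht' => Subtype.ext ?_⟩
  have heq := hbuniq _
    ⟨ht', ⟨p, by simp [hp]⟩, ⟨q, by simp [hq]⟩, ⟨t', by simp⟩, by simp, by simp⟩
  exact (eq_of_mem_triple (heq ▸ by simp) hp hq ht hXY hXZ hYZ).2.2 t'.2

section CellBlock

variable {T : ℕ}

def cellBlock (φx : X ≃ Fin T) (φy : Y ≃ Fin T) (φz : Z ≃ Fin T) (L : Fin T → Fin T → Fin T)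
    (c : Fin T × Fin T) : Finset P :=
  {(φx.symm c.1 : P), (φy.symm c.2 : P), (φz.symm (L c.1 c.2) : P)}

lemma mem_cellBlock (φx : X ≃ Fin T) (φy : Y ≃ Fin T) (φz : Z ≃ Fin T)
    (L : Fin T → Fin T → Fin T) (c : Fin T × Fin T) :
    (φx.symm c.1 : P) ∈ cellBlock φx φy φz L c ∧ (φy.symm c.2 : P) ∈ cellBlock φx φy φz L c ∧
      (φz.symm (L c.1 c.2) : P) ∈ cellBlock φx φy φz L c := by
  simp [cellBlock]

variable {φx : X ≃ Fin T} {φy : Y ≃ Fin T} {φz : Z ≃ Fin T} {L : Fin T → Fin T → Fin T}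

lemma cellBlock_subset (c : Fin T × Fin T) : cellBlock φx φy φz L c ⊆ X ∪ Y ∪ Z := by
  intro u hu
  simp only [cellBlock, mem_insert, mem_singleton] at hu
  rcases hu with rfl | rfl | rfl <;> simp [Subtype.prop]

lemma eq_of_mem_cellBlock (hXY : Disjoint X Y) (hXZ : Disjoint X Z) (hYZ : Disjoint Y Z)
    {c : Fin T × Fin T} {u : P} (hu : u ∈ cellBlock φx φy φz L c) :
    (u ∈ X → u = φx.symm c.1) ∧ (u ∈ Y → u = φy.symm c.2) ∧ (u ∈ Z → u = φz.symm (L c.1 c.2)) :=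
  eq_of_mem_triple hu (Subtype.prop _) (Subtype.prop _) (Subtype.prop _) hXY hXZ hYZ

lemma cellBlock_injective (hXY : Disjoint X Y) (hXZ : Disjoint X Z) (hYZ : Disjoint Y Z) :
    Injective (cellBlock φx φy φz L) := fun _ _ h => Prod.ext
  (φx.symm.injective <| Subtype.ext <|
    (eq_of_mem_cellBlock hXY hXZ hYZ (h ▸ (mem_cellBlock φx φy φz L _).1)).1 (Subtype.prop _))
  (φy.symm.injective <| Subtype.ext <|
    (eq_of_mem_cellBlock hXY hXZ hYZ (h ▸ (mem_cellBlock φx φy φz L _).2.1)).2.1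
      (Subtype.prop _))

lemma disjoint_cellBlock (hXY : Disjoint X Y) (hXZ : Disjoint X Z) (hYZ : Disjoint Y Z)
    {c c' : Fin T × Fin T} (h1 : c.1 ≠ c'.1) (h2 : c.2 ≠ c'.2) (h3 : L c.1 c.2 ≠ L c'.1 c'.2) :
    Disjoint (cellBlock φx φy φz L c) (cellBlock φx φy φz L c') := by
  refine disjoint_left.2 fun u hu hu' => ?_
  obtain ⟨hx, hy, hz⟩ := eq_of_mem_cellBlock hXY hXZ hYZ hu'
  simp only [cellBlock, mem_insert, mem_singleton] at hu
  rcases hu with rfl | rfl | rfl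
  · exact h1 (φx.symm.injective (Subtype.ext (hx (Subtype.prop _))))
  · exact h2 (φy.symm.injective (Subtype.ext (hy (Subtype.prop _))))
  · exact h3 (φz.symm.injective (Subtype.ext (hz (Subtype.prop _))))

lemma isParallelClassOn_cellBlock (hXY : Disjoint X Y) (hXZ : Disjoint X Z) (hYZ : Disjoint Y Z)
    {M : Fin T → Fin T → Fin T} (hM : IsLatinSquare M) (hLM : AreOrthogonal L M) (m : Fin T) :
    IsParallelClassOn (X ∪ Y ∪ Z)
      ((univ.filter fun c : Fin T × Fin T => M c.1 c.2 = m).image (cellBlock φx φy φz L)) := by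
  refine ⟨?_, Subset.antisymm (biUnion_subset.2 fun b hb => ?_) fun u hu => ?_⟩
  · simp only [mem_image, mem_filter, mem_univ, true_and]
    rintro _ ⟨c, hc, rfl⟩ _ ⟨c', hc', rfl⟩ hne
    have hcc' : c ≠ c' := fun e => hne (e ▸ rfl)
    -- the cells differ in their row and column since `M` is Latin, and in their `L`-value
    -- since `L` and `M` are orthogonal
    refine disjoint_cellBlock hXY hXZ hYZ (fun e => hcc' (Prod.ext e ?_))
      (fun e => hcc' (Prod.ext ?_ e)) fun e => hcc' (hLM (Prod.ext e (hc.trans hc'.symm)))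
    · exact (hM.1 c.1).1 (show M c.1 c.2 = M c.1 c'.2 by rw [hc, e, hc'])
    · exact (hM.2 c.2).1 (show M c.1 c.2 = M c'.1 c.2 by rw [hc, e, hc'])
  · obtain ⟨c, -, rfl⟩ := mem_image.1 hb
    exact cellBlock_subset c
  · simp only [mem_biUnion, mem_image, mem_filter, mem_univ, true_and, id,
      exists_exists_and_eq_and]
    rcases mem_union.1 hu with hu | hu
    rcases mem_union.1 hu with hu | hu
    · obtain ⟨j, hj⟩ := (hM.1 (φx ⟨u, hu⟩)).2 m
      exact ⟨(_, j), hj, by simpa using (mem_cellBlock φx φy φz L (φx ⟨u, hu⟩, j)).1⟩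
    · obtain ⟨i, hi⟩ := (hM.2 (φy ⟨u, hu⟩)).2 m
      exact ⟨(i, _), hi, by simpa using (mem_cellBlock φx φy φz L (i, φy ⟨u, hu⟩)).2.1⟩
    · obtain ⟨c, hc⟩ := Finite.injective_iff_surjective.1 hLM (φz ⟨u, hu⟩, m)
      simp only [Prod.mk.injEq] at hc
      exact ⟨c, hc.2, by simpa [hc.1] using (mem_cellBlock φx φy φz L c).2.2⟩

lemma exists_isResolutionOn_of_orthogonal {B : Finset (Finset P)} (hXY : Disjoint X Y)
    (hXZ : Disjoint X Z) (hYZ : Disjoint Y Z) (hB : ∀ b ∈ B, #b = 3)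
    (hL : ∀ i j m, L i j = m ↔
      ({(φx.symm i : P), (φy.symm j : P), (φz.symm m : P)} : Finset P) ∈ B)
    {M : Fin T → Fin T → Fin T} (hM : IsLatinSquare M) (hLM : AreOrthogonal L M) :
    ∃ R : Fin T → Finset (Finset P), IsResolutionOn (X ∪ Y ∪ Z)
      (B.filter fun b => (b ∩ X).Nonempty ∧ (b ∩ Y).Nonempty ∧ (b ∩ Z).Nonempty) R := by
  refine ⟨fun m => (univ.filter fun c : Fin T × Fin T => M c.1 c.2 = m).image
    (cellBlock φx φy φz L), isParallelClassOn_cellBlock hXY hXZ hYZ hM hLM, fun m m' hmm => ?_,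
    fun b => ?_⟩
  · simp only [onFun, disjoint_left, mem_image, mem_filter, mem_univ, true_and]
    rintro _ ⟨c, hc, rfl⟩ ⟨c', hc', h⟩
    exact hmm (hc.symm.trans (cellBlock_injective hXY hXZ hYZ h ▸ hc'))
  simp only [mem_filter, mem_image, mem_univ, true_and]
  constructor
  · rintro ⟨hb, ⟨p, hp⟩, ⟨q, hq⟩, hz⟩
    rw [mem_inter] at hp hq
    obtain ⟨t, ht, rfl⟩ := exists_eq_triple hXY hXZ hYZ (hB _ hb) hp.1 hp.2 hq.1 hq.2 hz
    have hLc : L (φx ⟨p, hp.2⟩) (φy ⟨q, hq.2⟩) = φz ⟨t, ht⟩ := (hL _ _ _).2 (by simpa using hb)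
    exact ⟨_, (φx ⟨p, hp.2⟩, φy ⟨q, hq.2⟩), rfl, by simp [cellBlock, hLc]⟩
  · rintro ⟨m, c, -, rfl⟩
    obtain ⟨hx, hy, hz⟩ := mem_cellBlock φx φy φz L c
    exact ⟨(hL _ _ _).1 rfl, ⟨_, mem_inter.2 ⟨hx, Subtype.prop _⟩⟩,
      ⟨_, mem_inter.2 ⟨hy, Subtype.prop _⟩⟩, ⟨_, mem_inter.2 ⟨hz, Subtype.prop _⟩⟩⟩

end CellBlock

lemma exists_isResolutionOn_of_transversalDesign {T : ℕ} {B : Finset (Finset P)}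
    (hXY : Disjoint X Y) (hXZ : Disjoint X Z) (hYZ : Disjoint Y Z)
    (hX : #X = T) (hY : #Y = T) (hZ : #Z = T) (hB : ∀ b ∈ B, #b = 3)
    (hTD : ∀ p ∈ X, ∀ q ∈ Y, ∃! b, b ∈ B ∧ (b ∩ X).Nonempty ∧ (b ∩ Y).Nonempty ∧
      (b ∩ Z).Nonempty ∧ p ∈ b ∧ q ∈ b)
    (hmate : ∀ (φx : X ≃ Fin T) (φy : Y ≃ Fin T) (φz : Z ≃ Fin T) (L : Fin T → Fin T → Fin T),
      (∀ i j m, L i j = m ↔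
        ({(φx.symm i : P), (φy.symm j : P), (φz.symm m : P)} : Finset P) ∈ B) →
      ∃ M, IsLatinSquare M ∧ AreOrthogonal L M) :
    ∃ R : Fin T → Finset (Finset P), IsResolutionOn (X ∪ Y ∪ Z)
      (B.filter fun b => (b ∩ X).Nonempty ∧ (b ∩ Y).Nonempty ∧ (b ∩ Z).Nonempty) R := by
  let φx := X.equivFinOfCardEq hX
  let φy := Y.equivFinOfCardEq hY
  let φz := Z.equivFinOfCardEq hZ
  have hthird (i j : Fin T) :
      ∃! m, ({(φx.symm i : P), (φy.symm j : P), (φz.symm m : P)} : Finset P) ∈ B :=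
    φz.existsUnique_congr_left.1
      (existsUnique_third_point hXY hXZ hYZ hB hTD (φx.symm i).2 (φy.symm j).2)
  choose L hL using hthird
  have hLiff (i j m) : L i j = m ↔
      ({(φx.symm i : P), (φy.symm j : P), (φz.symm m : P)} : Finset P) ∈ B :=
    ⟨fun h => h ▸ (hL i j).1, fun h => ((hL i j).2 m h).symm⟩
  obtain ⟨M, hM, hLM⟩ := hmate φx φy φz L hLiff
  exact exists_isResolutionOn_of_orthogonal hXY hXZ hYZ hB hLiff hM hLM

end TransversalDesign

section AffineLines

variable {V : Type*} [AddCommGroup V] [Module (ZMod 3) V]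

lemma three_nsmul_eq_zero (v : V) : 3 • v = 0 := by
  rw [← Nat.cast_smul_eq_nsmul (ZMod 3), show ((3 : ℕ) : ZMod 3) = 0 from rfl, zero_smul]

lemma sub_ne_add {a d : V} (hd : d ≠ 0) : a - d ≠ a + d := by
  intro h
  rw [← sub_eq_zero] at h
  apply hd
  rw [show d = 3 • d + (a - d - (a + d)) by abel, h, three_nsmul_eq_zero, add_zero]

lemma agLine_add_add_eq_zero (a d : V) : a - d + a + (a + d) = 0 := by
  rw [show a - d + a + (a + d) = 3 • a by abel, three_nsmul_eq_zero]

variable [DecidableEq V]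

def agLine (a d : V) : Finset V := {a - d, a, a + d}

lemma mem_agLine_iff {a d w : V} : w ∈ agLine a d ↔ w - a ∈ (ZMod 3) ∙ d := by
  rw [Submodule.mem_span_singleton]
  simp only [agLine, mem_insert, mem_singleton]
  constructor
  · rintro (rfl | rfl | rfl)
    exacts [⟨-1, by simp⟩, ⟨0, by simp⟩, ⟨1, by simp⟩]
  · rintro ⟨c, hc⟩
    rw [eq_sub_iff_add_eq'] at hc
    subst hc
    obtain rfl | rfl | rfl : c = -1 ∨ c = 0 ∨ c = 1 := by revert c; decide
    all_goals simp [sub_eq_add_neg]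

lemma card_agLine (a : V) {d : V} (hd : d ≠ 0) : #(agLine a d) = 3 :=
  card_eq_three.2 ⟨_, _, _, by simpa using hd, sub_ne_add hd, by simpa using hd, rfl⟩

lemma agLine_eq_of_add_add_eq_zero {x y z : V} (h : x + y + z = 0) :
    agLine y (z - y) = {x, y, z} := by
  have hx : y - (z - y) = x := by
    rw [← sub_eq_zero, show y - (z - y) - x = 3 • y - (x + y + z) by abel, h,
      three_nsmul_eq_zero, sub_zero]
  simp [agLine, hx]

-- The lines of direction `p` are indexed by the cosets `q` of the span of `p`.
noncomputable def dirLine (p : ℙ (ZMod 3) V) (q : V ⧸ p.submodule) : Finset V :=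
  agLine q.out p.rep

lemma mem_dirLine_iff {p : ℙ (ZMod 3) V} {q : V ⧸ p.submodule} {w : V} :
    w ∈ dirLine p q ↔ Submodule.Quotient.mk w = q := by
  rw [dirLine, mem_agLine_iff, ← p.submodule_eq, ← Submodule.Quotient.eq,
    Submodule.Quotient.mk_out]

lemma agLine_eq_dirLine (a : V) {d : V} (hd : d ≠ 0) :
    agLine a d = dirLine (.mk (ZMod 3) d hd) (Submodule.Quotient.mk a) := by
  ext w
  rw [mem_dirLine_iff, mem_agLine_iff, Submodule.Quotient.eq, Projectivization.submodule_mk]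

lemma span_le_of_agLine_eq {a d a' d' : V} (h : agLine a d = agLine a' d') :
    (ZMod 3) ∙ d' ≤ (ZMod 3) ∙ d := by
  rw [Submodule.span_singleton_le_iff_mem]
  have h1 : a' - a ∈ (ZMod 3) ∙ d := mem_agLine_iff.1 (h ▸ by simp [agLine])
  have h2 : a' + d' - a ∈ (ZMod 3) ∙ d := mem_agLine_iff.1 (h ▸ by simp [agLine])
  simpa using Submodule.sub_mem _ h2 h1

lemma eq_of_dirLine_eq {p p' : ℙ (ZMod 3) V} {q : V ⧸ p.submodule} {q' : V ⧸ p'.submodule}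
    (h : dirLine p q = dirLine p' q') : p = p' := by
  refine Projectivization.submodule_injective ?_
  rw [p.submodule_eq, p'.submodule_eq]
  exact le_antisymm (span_le_of_agLine_eq h.symm) (span_le_of_agLine_eq h)

lemma exists_dirLine_eq {x y z : V} (hyz : y ≠ z) (h : x + y + z = 0) :
    ∃ (p : ℙ (ZMod 3) V) (q : V ⧸ p.submodule), dirLine p q = {x, y, z} :=
  ⟨_, _, (agLine_eq_dirLine y (sub_ne_zero.2 hyz.symm)).symm.trans
    (agLine_eq_of_add_add_eq_zero h)⟩

lemma pairwise_disjoint_dirLine (p : ℙ (ZMod 3) V) : Pairwise (Disjoint on dirLine p) :=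
  fun _ _ hqq' => disjoint_left.2 fun _ hw hw' =>
    hqq' ((mem_dirLine_iff.1 hw).symm.trans (mem_dirLine_iff.1 hw'))

lemma biUnion_biUnion_dirLine [Fintype V] {α : Type*} [DecidableEq α] (p : ℙ (ZMod 3) V)
    (f : V → Finset α) : univ.biUnion (fun q => (dirLine p q).biUnion f) = univ.biUnion f := by
  ext u
  simp only [mem_biUnion, mem_univ, true_and, mem_dirLine_iff]
  exact ⟨fun ⟨_, w, _, hu⟩ => ⟨w, hu⟩, fun ⟨w, hu⟩ => ⟨_, w, rfl, hu⟩⟩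

end AffineLines

section Gluing

variable {P V : Type*} [DecidableEq P] {G : V → Finset P}

lemma subset_of_forall_inter_nonempty (hG : Pairwise (Disjoint on G)) {b : Finset P}
    {ℓ ℓ' : Finset V} (hb : ∀ w ∈ ℓ, (b ∩ G w).Nonempty) (hsub : b ⊆ ℓ'.biUnion G) : ℓ ⊆ ℓ' := by
  intro w hw
  obtain ⟨u, hu⟩ := hb w hw
  obtain ⟨hub, huw⟩ := mem_inter.1 hu
  obtain ⟨w', hw', huw'⟩ := mem_biUnion.1 (hsub hub)
  obtain rfl : w = w' := by_contra fun hne => disjoint_left.1 (hG hne) huw huw'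
  exact hw'

lemma disjoint_biUnion_of_disjoint (hG : Pairwise (Disjoint on G)) {ℓ ℓ' : Finset V}
    (h : Disjoint ℓ ℓ') : Disjoint (ℓ.biUnion G) (ℓ'.biUnion G) := by
  rw [disjoint_biUnion_left]
  intro w hw
  rw [disjoint_biUnion_right]
  exact fun w' hw' => hG fun e => disjoint_left.1 h hw (e ▸ hw')

def transversalBlocks (B : Finset (Finset P)) (G : V → Finset P) (ℓ : Finset V) :
    Finset (Finset P) :=
  B.filter fun b => ∀ w ∈ ℓ, (b ∩ G w).Nonempty

lemma mem_transversalBlocks {B : Finset (Finset P)} {ℓ : Finset V} {b : Finset P} :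
    b ∈ transversalBlocks B G ℓ ↔ b ∈ B ∧ ∀ w ∈ ℓ, (b ∩ G w).Nonempty :=
  mem_filter

lemma eq_of_mem_transversalBlocks (hG : Pairwise (Disjoint on G)) {B : Finset (Finset P)}
    {ℓ ℓ' : Finset V} {b : Finset P} (hb : b ∈ transversalBlocks B G ℓ)
    (hb' : b ∈ transversalBlocks B G ℓ') (hsub : b ⊆ ℓ.biUnion G) (hsub' : b ⊆ ℓ'.biUnion G) :
    ℓ = ℓ' :=
  (subset_of_forall_inter_nonempty hG (mem_transversalBlocks.1 hb).2 hsub').antisymm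
    (subset_of_forall_inter_nonempty hG (mem_transversalBlocks.1 hb').2 hsub)

lemma disjoint_filter_subset_transversalBlocks (hG : Pairwise (Disjoint on G))
    (B : Finset (Finset P)) (x : V) {ℓ : Finset V} (hℓ : 1 < #ℓ) :
    Disjoint (B.filter (· ⊆ G x)) (transversalBlocks B G ℓ) := by
  refine disjoint_left.2 fun b hbx hb => ?_
  have hsub := subset_of_forall_inter_nonempty hG (mem_transversalBlocks.1 hb).2
    (ℓ' := {x}) (by simpa using (mem_filter.1 hbx).2)
  exact absurd (card_le_card hsub) (by simpa using hℓ)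

variable [AddCommGroup V] [Module (ZMod 3) V] [DecidableEq V]

lemma exists_isResolutionOn_dirLine {κ : Type*} {B : Finset (Finset P)}
    (hcross : ∀ x y z, x ≠ y → x ≠ z → y ≠ z → x + y + z = 0 →
      ∃ R : κ → Finset (Finset P), IsResolutionOn (G x ∪ G y ∪ G z)
        (B.filter fun b => (b ∩ G x).Nonempty ∧ (b ∩ G y).Nonempty ∧ (b ∩ G z).Nonempty) R)
    (p : ℙ (ZMod 3) V) (q : V ⧸ p.submodule) : ∃ R : κ → Finset (Finset P),
      IsResolutionOn ((dirLine p q).biUnion G) (transversalBlocks B G (dirLine p q)) R := by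
  have hd := p.rep_nonzero
  obtain ⟨R, hR⟩ := hcross _ _ _ (by simpa using hd) (sub_ne_add hd) (by simpa using hd)
    (agLine_add_add_eq_zero q.out p.rep)
  exact ⟨R, by simpa [transversalBlocks, dirLine, agLine, union_assoc] using hR⟩

variable [Fintype V]

lemma pairwise_disjoint_transversalBlocks_dirLine (hG : Pairwise (Disjoint on G))
    {B : Finset (Finset P)} (hsub : ∀ p q, ∀ b ∈ transversalBlocks B G (dirLine p q),
      b ⊆ (dirLine p q).biUnion G) :
    Pairwise (Disjoint on fun p : ℙ (ZMod 3) V =>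
      univ.biUnion fun q => transversalBlocks B G (dirLine p q)) := by
  intro p p' hpp'
  simp only [onFun, disjoint_left, mem_biUnion, mem_univ, true_and]
  rintro b ⟨q, hb⟩ ⟨q', hb'⟩
  exact hpp' (eq_of_dirLine_eq (eq_of_mem_transversalBlocks hG hb hb'
    (hsub p q b hb) (hsub p' q' b hb')))

lemma eq_union_transversalBlocks_dirLine [Fintype (ℙ (ZMod 3) V)] {B : Finset (Finset P)}
    (hLineBlocks : ∀ b ∈ B, (¬ ∃ x, b ⊆ G x) →
      ∃ x y z, x ≠ y ∧ x ≠ z ∧ y ≠ z ∧ x + y + z = 0 ∧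
        (b ∩ G x).Nonempty ∧ (b ∩ G y).Nonempty ∧ (b ∩ G z).Nonempty) :
    B = (univ.biUnion fun x => B.filter (· ⊆ G x)) ∪
      univ.biUnion fun p : ℙ (ZMod 3) V => univ.biUnion fun q =>
        transversalBlocks B G (dirLine p q) := by
  ext b
  simp only [mem_union, mem_biUnion, mem_univ, true_and, mem_filter, mem_transversalBlocks]
  refine ⟨fun hb => ?_, by rintro (⟨x, hb, -⟩ | ⟨p, q, hb, -⟩) <;> exact hb⟩
  by_cases hin : ∃ x, b ⊆ G x
  · exact Or.inl (hin.imp fun x hx => ⟨hb, hx⟩)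
  obtain ⟨x, y, z, -, -, hyz, hsum, hx, hy, hz⟩ := hLineBlocks b hb hin
  obtain ⟨p, q, hpq⟩ := exists_dirLine_eq hyz hsum
  exact Or.inr ⟨p, q, hb, by simp [hpq, hx, hy, hz]⟩

theorem isResolvable_of_isResolutionOn_groups_lines [Fintype P] {ι κ : Type*} [Fintype ι]
    [Fintype κ] {B : Finset (Finset P)} (hB : ∀ b ∈ B, b.Nonempty)
    (hGdisj : Pairwise (Disjoint on G)) (hGcover : univ.biUnion G = univ)
    (hLineBlocks : ∀ b ∈ B, (¬ ∃ x, b ⊆ G x) →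
      ∃ x y z, x ≠ y ∧ x ≠ z ∧ y ≠ z ∧ x + y + z = 0 ∧
        (b ∩ G x).Nonempty ∧ (b ∩ G y).Nonempty ∧ (b ∩ G z).Nonempty)
    (hinner : ∀ x, ∃ R : ι → Finset (Finset P), IsResolutionOn (G x) (B.filter (· ⊆ G x)) R)
    (hcross : ∀ x y z, x ≠ y → x ≠ z → y ≠ z → x + y + z = 0 →
      ∃ R : κ → Finset (Finset P), IsResolutionOn (G x ∪ G y ∪ G z)
        (B.filter fun b => (b ∩ G x).Nonempty ∧ (b ∩ G y).Nonempty ∧ (b ∩ G z).Nonempty) R) :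
    IsResolvable B := by
  have := Fintype.ofFinite (ℙ (ZMod 3) V)
  choose Rin hRin using hinner
  choose Rx hRx using exists_isResolutionOn_dirLine hcross
  have hInner : IsResolutionOn univ (univ.biUnion fun x => B.filter (· ⊆ G x))
      fun i => univ.biUnion fun x => Rin x i := by
    simpa only [hGcover] using
      IsResolutionOn.biUnion hGdisj (fun x b hb => hB b (mem_filter.1 hb).1) hRin
  have hDir (p : ℙ (ZMod 3) V) : IsResolutionOn univ
      (univ.biUnion fun q => transversalBlocks B G (dirLine p q))
      fun j => univ.biUnion fun q => Rx p q j := by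
    simpa only [biUnion_biUnion_dirLine, hGcover] using IsResolutionOn.biUnion
      (fun q q' h => disjoint_biUnion_of_disjoint hGdisj (pairwise_disjoint_dirLine p h))
      (fun q b hb => hB b (mem_transversalBlocks.1 hb).1) (hRx p)
  have hCross := IsResolutionOn.prod (pairwise_disjoint_transversalBlocks_dirLine hGdisj
    fun p q _ hb => (hRx p q).subset_of_mem hb) hDir
  have hIC : Disjoint (univ.biUnion fun x => B.filter (· ⊆ G x))
      (univ.biUnion fun p => univ.biUnion fun q => transversalBlocks B G (dirLine p q)) := by
    refine (disjoint_biUnion_left _ _ _).2 fun x _ => (disjoint_biUnion_right _ _ _).2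
      fun p _ => (disjoint_biUnion_right _ _ _).2 fun q _ => ?_
    exact disjoint_filter_subset_transversalBlocks hGdisj B x
      (by rw [dirLine, card_agLine _ p.rep_nonzero]; norm_num)
  rw [eq_union_transversalBlocks_dirLine hLineBlocks]
  exact (hInner.sum hCross hIC).isResolvable

end Gluing

theorem sts_decomposition_resolvable_general {P : Type*} [Fintype P] [DecidableEq P]
    (k r : ℕ)
    (hP : Fintype.card P = 3 ^ k) (B : Finset (Finset P)) (hB : IsSTS B)
    (G : (Fin (r - 1) → ZMod 3) → Finset P)
    -- the groups partition the points and have size `T = 3^(k-r+1)`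
    (hGdisj : ∀ x y, x ≠ y → Disjoint (G x) (G y))
    (hGcover : Finset.univ.biUnion G = Finset.univ)
    (hGcard : ∀ x, (G x).card = 3 ^ (k - r + 1))
    -- (i) the blocks inside each group form a sub-STS on that group
    (hSub : ∀ x, IsSTSOn (G x) (B.filter fun b => b ⊆ G x))
    -- (ii) every other block has its three points in three distinct groups on a line
    (hLineBlocks : ∀ b ∈ B, (¬ ∃ x, b ⊆ G x) →
      ∃ x y z, x ≠ y ∧ x ≠ z ∧ y ≠ z ∧ x + y + z = 0 ∧
        (b ∩ G x).Nonempty ∧ (b ∩ G y).Nonempty ∧ (b ∩ G z).Nonempty)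
    -- (iii) the cross blocks of each line form a transversal design `TD[3;T]`
    (hTD : ∀ x y z, x ≠ y → x ≠ z → y ≠ z → x + y + z = 0 →
      ∀ u ∈ ({x, y, z} : Finset (Fin (r - 1) → ZMod 3)),
        ∀ v ∈ ({x, y, z} : Finset (Fin (r - 1) → ZMod 3)), u ≠ v →
          ∀ p ∈ G u, ∀ q ∈ G v,
            ∃! b, b ∈ B ∧ (b ∩ G x).Nonempty ∧ (b ∩ G y).Nonempty ∧
              (b ∩ G z).Nonempty ∧ p ∈ b ∧ q ∈ b)
    -- (a) the sub-STS on every group is resolvable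
    (hres : ∀ x, IsResolvableOn (G x) (B.filter fun b => b ⊆ G x))
    -- (b) the Latin square of the transversal design of every line has an orthogonal mate
    (hmate : ∀ x y z, x ≠ y → x ≠ z → y ≠ z → x + y + z = 0 →
      ∀ (φx : {p // p ∈ G x} ≃ Fin (3 ^ (k - r + 1)))
        (φy : {p // p ∈ G y} ≃ Fin (3 ^ (k - r + 1)))
        (φz : {p // p ∈ G z} ≃ Fin (3 ^ (k - r + 1)))
        (L : Fin (3 ^ (k - r + 1)) → Fin (3 ^ (k - r + 1)) → Fin (3 ^ (k - r + 1))),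
        (∀ i j m, L i j = m ↔
          ({(φx.symm i : P), (φy.symm j : P), (φz.symm m : P)} : Finset P) ∈ B) →
        ∃ M, IsLatinSquare M ∧ AreOrthogonal L M) :
    IsResolvable B ∧
      ∃ F : Finpartition B, F.parts.card = (3 ^ k - 1) / 2 ∧
        ∀ C ∈ F.parts, IsParallelClass C := by
  have hinner (x) : ∃ R : Fin ((3 ^ (k - r + 1) - 1) / 2) → Finset (Finset P),
      IsResolutionOn (G x) (B.filter (· ⊆ G x)) R := by
    rw [← hGcard x]
    exact (hres x).exists_isResolutionOn (hSub x) (card_pos.1 (by rw [hGcard x]; positivity))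
  have hcross (x y z) (hxy : x ≠ y) (hxz : x ≠ z) (hyz : y ≠ z) (hsum : x + y + z = 0) :=
    exists_isResolutionOn_of_transversalDesign (hGdisj x y hxy) (hGdisj x z hxz)
      (hGdisj y z hyz) (hGcard x) (hGcard y) (hGcard z) hB.1
      (fun p hp q hq => hTD x y z hxy hxz hyz hsum x (by simp) y (by simp) hxy p hp q hq)
      (hmate x y z hxy hxz hyz hsum)
  obtain ⟨F, hF⟩ := isResolvable_of_isResolutionOn_groups_lines
    (fun b hb => card_pos.1 (by rw [hB.1 b hb]; norm_num)) hGdisj hGcover hLineBlocks hinner hcross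
  have : Nonempty P := Fintype.card_pos_iff.1 (by rw [hP]; positivity)
  have hcount := hB.two_mul_card_parts F hF
  exact ⟨⟨F, hF⟩, F, by omega, hF⟩

/-- **Main theorem.**  Let `2 ≤ r ≤ k` and `T = 3^(k-r+1)`, and let `B` be a Steiner
triple system on `3^k` points with a `(k,r)`-decomposition into groups `G x` of size `T`
indexed by `x ∈ (ZMod 3)^(r-1)`.  If (a) the sub-STS on every group is resolvable, and
(b) for every line `{x,y,z}` of `AG(r-1,3)` the Latin square of order `T` determined by
the transversal design of the blocks meeting all three of `G x`, `G y`, `G z` has an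
orthogonal mate, then `B` is resolvable; in particular `B` can be partitioned into
`(3^k - 1)/2` parallel classes. -/
theorem sts_decomposition_resolvable {P : Type*} [Fintype P] [DecidableEq P]
    (k r : ℕ) (hr : 2 ≤ r) (hk : r ≤ k)
    (hP : Fintype.card P = 3 ^ k) (B : Finset (Finset P)) (hB : IsSTS B)
    (G : (Fin (r - 1) → ZMod 3) → Finset P)
    -- the groups partition the points and have size `T = 3^(k-r+1)`
    (hGdisj : ∀ x y, x ≠ y → Disjoint (G x) (G y))
    (hGcover : Finset.univ.biUnion G = Finset.univ)
    (hGcard : ∀ x, (G x).card = 3 ^ (k - r + 1))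
    -- (i) the blocks inside each group form a sub-STS on that group
    (hSub : ∀ x, IsSTSOn (G x) (B.filter fun b => b ⊆ G x))
    -- (ii) every other block has its three points in three distinct groups on a line
    (hLineBlocks : ∀ b ∈ B, (¬ ∃ x, b ⊆ G x) →
      ∃ x y z, x ≠ y ∧ x ≠ z ∧ y ≠ z ∧ x + y + z = 0 ∧
        (b ∩ G x).Nonempty ∧ (b ∩ G y).Nonempty ∧ (b ∩ G z).Nonempty)
    -- (iii) the cross blocks of each line form a transversal design `TD[3;T]`
    (hTD : ∀ x y z, x ≠ y → x ≠ z → y ≠ z → x + y + z = 0 →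
      ∀ u ∈ ({x, y, z} : Finset (Fin (r - 1) → ZMod 3)),
        ∀ v ∈ ({x, y, z} : Finset (Fin (r - 1) → ZMod 3)), u ≠ v →
          ∀ p ∈ G u, ∀ q ∈ G v,
            ∃! b, b ∈ B ∧ (b ∩ G x).Nonempty ∧ (b ∩ G y).Nonempty ∧
              (b ∩ G z).Nonempty ∧ p ∈ b ∧ q ∈ b)
    -- (a) the sub-STS on every group is resolvable
    (hres : ∀ x, IsResolvableOn (G x) (B.filter fun b => b ⊆ G x))
    -- (b) the Latin square of the transversal design of every line has an orthogonal mate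
    (hmate : ∀ x y z, x ≠ y → x ≠ z → y ≠ z → x + y + z = 0 →
      ∀ (φx : {p // p ∈ G x} ≃ Fin (3 ^ (k - r + 1)))
        (φy : {p // p ∈ G y} ≃ Fin (3 ^ (k - r + 1)))
        (φz : {p // p ∈ G z} ≃ Fin (3 ^ (k - r + 1)))
        (L : Fin (3 ^ (k - r + 1)) → Fin (3 ^ (k - r + 1)) → Fin (3 ^ (k - r + 1))),
        (∀ i j m, L i j = m ↔
          ({(φx.symm i : P), (φy.symm j : P), (φz.symm m : P)} : Finset P) ∈ B) →
        ∃ M, IsLatinSquare M ∧ AreOrthogonal L M) :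
    IsResolvable B ∧
      ∃ F : Finpartition B, F.parts.card = (3 ^ k - 1) / 2 ∧
        ∀ C ∈ F.parts, IsParallelClass C :=
  sts_decomposition_resolvable_general k r hP B hB G hGdisj hGcover hGcard hSub hLineBlocks hTD hres
    hmate
end

section
/- Let k ≥ r ≥ 2 be integers. If a Steiner triple system S on 3^k points has 3-rank at most 3^k − r, then S admits a (k,r)-decomposition: there is a partition of its point set into 3^(r-1) groups G_x of size T = 3^(k-r+1), indexed by x ∈ (ZMod 3)^(r-1), such that (i) for each x the blocks contained in G_x form a Steiner triple system on G_x (with T(T−1)/6 blocks), (ii) every block not contained in a single group has its three points in three distinct groups G_x, G_y, G_z with x + y + z = 0, and (iii) for each line {x,y,z} of AG(r-1,3) the set of blocks meeting all three of G_x, G_y, G_z forms a transversal design TD[3;T], i.e. it has T^2 blocks and every pair of points from two different groups among G_x, G_y, G_z lies in exactly one of them. -/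
/-- The block-point incidence matrix over `ZMod 3`. -/
def incMatrix3 {P : Type*} [DecidableEq P] (B : Finset (Finset P)) :
    Matrix {b // b ∈ B} P (ZMod 3) :=
  fun b p => if p ∈ b.1 then 1 else 0

open Finset

section SteinerTripleSystem

variable {P : Type*} [DecidableEq P] {B : Finset (Finset P)}

lemma exists_eq_triple_of_card_eq_three {b : Finset P} (hb : #b = 3) {p q : P} (hp : p ∈ b)
    (hq : q ∈ b) (hpq : p ≠ q) : ∃ s, s ≠ p ∧ s ≠ q ∧ b = {p, q, s} := by
  have hq' : q ∈ b.erase p := mem_erase.mpr ⟨hpq.symm, hq⟩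
  obtain ⟨s, hs⟩ : ∃ s, (b.erase p).erase q = {s} := by
    rw [← card_eq_one, card_erase_of_mem hq', card_erase_of_mem hp, hb]
  have hs' : s ∈ (b.erase p).erase q := hs ▸ mem_singleton_self s
  refine ⟨s, (mem_erase.mp (mem_erase.mp hs').2).1, (mem_erase.mp hs').1, ?_⟩
  rw [← insert_erase hp, ← insert_erase hq', hs]

lemma IsSTS.eq_of_mem (hB : IsSTS B) {p q : P} (hpq : p ≠ q) {b b' : Finset P}
    (hb : b ∈ B) (hpb : p ∈ b) (hqb : q ∈ b) (hb' : b' ∈ B) (hpb' : p ∈ b') (hqb' : q ∈ b') :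
    b = b' :=
  (hB.2 p q hpq).unique ⟨hb, hpb, hqb⟩ ⟨hb', hpb', hqb'⟩

open Classical in
/-- The third point of the block through `p` and `q` (junk value `p` if there is none). -/
noncomputable def third (B : Finset (Finset P)) (p q : P) : P :=
  if h : ∃ s, s ≠ p ∧ s ≠ q ∧ {p, q, s} ∈ B then h.choose else p

lemma IsSTS.third_spec (hB : IsSTS B) {p q : P} (hpq : p ≠ q) :
    third B p q ≠ p ∧ third B p q ≠ q ∧ {p, q, third B p q} ∈ B := by
  have h : ∃ s, s ≠ p ∧ s ≠ q ∧ {p, q, s} ∈ B := by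
    obtain ⟨b, ⟨hb, hpb, hqb⟩, -⟩ := hB.2 p q hpq
    obtain ⟨s, hsp, hsq, rfl⟩ := exists_eq_triple_of_card_eq_three (hB.1 b hb) hpb hqb hpq
    exact ⟨s, hsp, hsq, hb⟩
  rw [third, dif_pos h]
  exact h.choose_spec

lemma IsSTS.third_eq (hB : IsSTS B) {p q s : P} (hpq : p ≠ q)
    (hs : {p, q, s} ∈ B) : third B p q = s := by
  obtain ⟨htp, htq, ht⟩ := hB.third_spec hpq
  have hmem : third B p q ∈ ({p, q, s} : Finset P) :=
    hB.eq_of_mem hpq ht (by simp) (by simp) hs (by simp) (by simp) ▸ (by simp)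
  simpa [htp, htq] using hmem

lemma IsSTS.third_third (hB : IsSTS B) {p q : P} (hpq : p ≠ q) : third B p (third B p q) = q := by
  obtain ⟨htp, htq, ht⟩ := hB.third_spec hpq
  exact hB.third_eq htp.symm (by rwa [pair_comm])

lemma IsSTS.isSTSOn_filter_subset (hB : IsSTS B) {S : Finset P}
    (hS : ∀ p ∈ S, ∀ q ∈ S, p ≠ q → third B p q ∈ S) : IsSTSOn S (B.filter (· ⊆ S)) := by
  refine ⟨fun b hb => ⟨(mem_filter.mp hb).2, hB.1 b (mem_filter.mp hb).1⟩, ?_⟩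
  intro p hp q hq hpq
  obtain ⟨b, ⟨hb, hpb, hqb⟩, huniq⟩ := hB.2 p q hpq
  refine ⟨b, ⟨mem_filter.mpr ⟨hb, ?_⟩, hpb, hqb⟩,
    fun b' hb' => huniq b' ⟨(mem_filter.mp hb'.1).1, hb'.2⟩⟩
  obtain ⟨-, -, ht⟩ := hB.third_spec hpq
  rw [hB.eq_of_mem hpq hb hpb hqb ht (by simp) (by simp)]
  simp [insert_subset_iff, hp, hq, hS p hp q hq hpq]

lemma IsSTSOn.card_mul_six {S : Finset P} (hB : IsSTSOn S B) : #B * 6 = #S * (#S - 1) := by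
  have h := card_mul_eq_card_mul (s := S.offDiag) (t := B) (m := 1) (n := 6)
    (fun pq b => pq.1 ∈ b ∧ pq.2 ∈ b) ?_ ?_
  · rw [mul_one, offDiag_card, ← Nat.mul_sub_one] at h
    exact h.symm
  · rintro ⟨p, q⟩ hpq
    obtain ⟨hp, hq, hpq⟩ := mem_offDiag.mp hpq
    exact card_eq_one_iff_existsUnique.mpr (by simpa [bipartiteAbove] using hB.2 p hp q hq hpq)
  · intro b hb
    have hbS := (hB.1 b hb).1
    have : S.offDiag.bipartiteBelow (fun pq b => pq.1 ∈ b ∧ pq.2 ∈ b) b = b.offDiag := by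
      ext ⟨p, q⟩
      simp only [bipartiteBelow, mem_filter, mem_offDiag]
      constructor
      · rintro ⟨⟨-, -, hpq⟩, hp, hq⟩; exact ⟨hp, hq, hpq⟩
      · rintro ⟨hp, hq, hpq⟩; exact ⟨⟨hbS hp, hbS hq, hpq⟩, hp, hq⟩
    rw [this, offDiag_card, (hB.1 b hb).2]

end SteinerTripleSystem

lemma neg_add_self_eq_self_of_zmod_three {V : Type*} [AddCommGroup V] [Module (ZMod 3) V]
    (v : V) : -(v + v) = v := by
  rw [neg_eq_iff_add_eq_zero]
  have h : (3 : ZMod 3) • v = 0 := by rw [show (3 : ZMod 3) = 0 from rfl, zero_smul]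
  rwa [show (3 : ZMod 3) = 1 + 1 + 1 from rfl, add_smul, add_smul, one_smul] at h

lemma eq_or_eq_or_eq_neg_add_of_mem_line {V : Type*} [AddCommGroup V] [DecidableEq V]
    {x y z u v t : V} (hxyz : x + y + z = 0) (hu : u ∈ ({x, y, z} : Finset V))
    (hv : v ∈ ({x, y, z} : Finset V)) (huv : u ≠ v) (ht : t ∈ ({x, y, z} : Finset V)) :
    t = u ∨ t = v ∨ t = -(u + v) := by
  simp only [mem_insert, mem_singleton] at hu hv ht
  grind

lemma card_eq_card_mul_card_of_existsUnique {P : Type*} [DecidableEq P]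
    {C : Finset (Finset P)} {S T : Finset P}
    (hunique : ∀ p ∈ S, ∀ q ∈ T, ∃! b, b ∈ C ∧ p ∈ b ∧ q ∈ b)
    (hmeet : ∀ b ∈ C, #(b ∩ S) = 1 ∧ #(b ∩ T) = 1) : #C = #S * #T := by
  have h := card_mul_eq_card_mul (s := S ×ˢ T) (t := C) (m := 1) (n := 1)
    (fun pq b => pq.1 ∈ b ∧ pq.2 ∈ b) ?_ ?_
  · rw [mul_one, mul_one, card_product] at h
    exact h.symm
  · rintro ⟨p, q⟩ hpq
    obtain ⟨hp, hq⟩ := mem_product.mp hpq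
    exact card_eq_one_iff_existsUnique.mpr (by simpa [bipartiteAbove] using hunique p hp q hq)
  · intro b hb
    have : (S ×ˢ T).bipartiteBelow (fun pq b => pq.1 ∈ b ∧ pq.2 ∈ b) b = (b ∩ S) ×ˢ (b ∩ T) := by
      ext ⟨p, q⟩
      simp only [bipartiteBelow, mem_filter, mem_product, mem_inter]
      tauto
    rw [this, card_product, (hmeet b hb).1, (hmeet b hb).2]

def fiber {P V : Type*} [Fintype P] [DecidableEq V] (φ : P → V) (x : V) : Finset P :=
  {p | φ p = x}

@[simp] lemma mem_fiber {P V : Type*} [Fintype P] [DecidableEq V] {φ : P → V} {p : P} {x : V} :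
    p ∈ fiber φ x ↔ φ p = x := by
  simp [fiber]

section BlockSums

variable {P V : Type*} [DecidableEq P] {B : Finset (Finset P)}

def SumZeroOnBlocks [AddCommMonoid V] (B : Finset (Finset P)) (f : P → V) : Prop :=
  ∀ b ∈ B, ∑ p ∈ b, f p = 0

lemma IsSTS.sumZeroOnBlocks_one (hB : IsSTS B) : SumZeroOnBlocks B (1 : P → ZMod 3) := by
  intro b hb
  simp [hB.1 b hb]
  rfl

variable [AddCommGroup V] {φ : P → V}

lemma SumZeroOnBlocks.add_add_eq_zero (hφ : SumZeroOnBlocks B φ) {p q s : P} (hpq : p ≠ q)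
    (hps : p ≠ s) (hqs : q ≠ s) (h : {p, q, s} ∈ B) : φ p + φ q + φ s = 0 := by
  have := hφ _ h
  rwa [sum_insert (by simp [hpq, hps]), sum_insert (by simpa), sum_singleton, ← add_assoc] at this

lemma SumZeroOnBlocks.apply_third (hφ : SumZeroOnBlocks B φ) (hB : IsSTS B) {p q : P}
    (hpq : p ≠ q) : φ (third B p q) = -(φ p + φ q) := by
  obtain ⟨htp, htq, ht⟩ := hB.third_spec hpq
  rw [eq_neg_iff_add_eq_zero, add_comm]
  exact hφ.add_add_eq_zero hpq htp.symm htq.symm ht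

lemma SumZeroOnBlocks.apply_eq_of_apply_eq [Module (ZMod 3) V] (hφ : SumZeroOnBlocks B φ)
    (hB : IsSTS B) {b : Finset P} (hb : b ∈ B) {p q t : P} (hp : p ∈ b) (hq : q ∈ b) (ht : t ∈ b)
    (hpq : p ≠ q) (h : φ p = φ q) : φ t = φ p := by
  obtain ⟨-, -, hthird⟩ := hB.third_spec hpq
  rw [hB.eq_of_mem hpq hb hp hq hthird (by simp) (by simp)] at ht
  simp only [mem_insert, mem_singleton] at ht
  rcases ht with rfl | rfl | rfl
  · rfl
  · exact h.symm
  · rw [hφ.apply_third hB hpq, ← h, neg_add_self_eq_self_of_zmod_three]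

variable [Fintype P] [DecidableEq V]

lemma SumZeroOnBlocks.existsUnique_block_meeting_line (hφ : SumZeroOnBlocks B φ) (hB : IsSTS B)
    {x y z u v : V} (hxyz : x + y + z = 0) (hu : u ∈ ({x, y, z} : Finset V))
    (hv : v ∈ ({x, y, z} : Finset V)) (huv : u ≠ v) {p q : P} (hp : φ p = u) (hq : φ q = v) :
    ∃! b, b ∈ B ∧ (b ∩ fiber φ x).Nonempty ∧ (b ∩ fiber φ y).Nonempty ∧
      (b ∩ fiber φ z).Nonempty ∧ p ∈ b ∧ q ∈ b := by
  have hpq : p ≠ q := fun h => huv (hp ▸ hq ▸ congrArg φ h)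
  obtain ⟨-, -, hthird⟩ := hB.third_spec hpq
  have hmeet : ∀ w ∈ ({x, y, z} : Finset V),
      (({p, q, third B p q} : Finset P) ∩ fiber φ w).Nonempty := by
    intro w hw
    rcases eq_or_eq_or_eq_neg_add_of_mem_line hxyz hu hv huv hw with rfl | rfl | rfl
    · exact ⟨p, by simp [hp]⟩
    · exact ⟨q, by simp [hq]⟩
    · exact ⟨third B p q, by simp [hφ.apply_third hB hpq, hp, hq]⟩
  refine ⟨{p, q, third B p q}, ⟨hthird, hmeet x (by simp), hmeet y (by simp), hmeet z (by simp),
    by simp, by simp⟩, ?_⟩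
  rintro b ⟨hb, -, -, -, hpb, hqb⟩
  exact hB.eq_of_mem hpq hb hpb hqb hthird (by simp) (by simp)

variable [Module (ZMod 3) V]

lemma SumZeroOnBlocks.third_mem_fiber (hφ : SumZeroOnBlocks B φ) (hB : IsSTS B) {x : V}
    {p q : P} (hp : p ∈ fiber φ x) (hq : q ∈ fiber φ x)
    (hpq : p ≠ q) : third B p q ∈ fiber φ x := by
  rw [mem_fiber] at hp hq ⊢
  rw [hφ.apply_third hB hpq, hp, hq, neg_add_self_eq_self_of_zmod_three]

lemma SumZeroOnBlocks.card_inter_fiber_eq_one (hφ : SumZeroOnBlocks B φ) (hB : IsSTS B)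
    {b : Finset P} (hb : b ∈ B) {x : V} (hmeet : (b ∩ fiber φ x).Nonempty)
    (hnot : ¬ b ⊆ fiber φ x) : #(b ∩ fiber φ x) = 1 := by
  refine le_antisymm (card_le_one.mpr fun p hp q hq => ?_) (card_pos.mpr hmeet)
  by_contra hpq
  simp only [mem_inter, mem_fiber] at hp hq
  refine hnot fun t ht => ?_
  rw [mem_fiber, hφ.apply_eq_of_apply_eq hB hb hp.1 hq.1 ht hpq (hp.2.trans hq.2.symm), hp.2]

lemma SumZeroOnBlocks.exists_line_of_not_subset_fiber (hφ : SumZeroOnBlocks B φ) (hB : IsSTS B)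
    {b : Finset P} (hb : b ∈ B) (hnot : ¬ ∃ x, b ⊆ fiber φ x) :
    ∃ x y z, x ≠ y ∧ x ≠ z ∧ y ≠ z ∧ x + y + z = 0 ∧ #(b ∩ fiber φ x) = 1 ∧
      #(b ∩ fiber φ y) = 1 ∧ #(b ∩ fiber φ z) = 1 := by
  have hinj : ∀ p ∈ b, ∀ q ∈ b, p ≠ q → φ p ≠ φ q := fun p hp q hq hpq h =>
    hnot ⟨φ p, fun t ht => by simp [hφ.apply_eq_of_apply_eq hB hb hp hq ht hpq h]⟩
  have hcard : ∀ p ∈ b, #(b ∩ fiber φ (φ p)) = 1 := fun p hp =>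
    hφ.card_inter_fiber_eq_one hB hb ⟨p, by simp [hp]⟩ fun h => hnot ⟨φ p, h⟩
  obtain ⟨p, q, s, hpq, hps, hqs, rfl⟩ := card_eq_three.mp (hB.1 b hb)
  refine ⟨φ p, φ q, φ s, hinj p (by simp) q (by simp) hpq, hinj p (by simp) s (by simp) hps,
    hinj q (by simp) s (by simp) hqs, hφ.add_add_eq_zero hpq hps hqs hb,
    hcard p (by simp), hcard q (by simp), hcard s (by simp)⟩

lemma SumZeroOnBlocks.card_blocks_meeting_line (hφ : SumZeroOnBlocks B φ) (hB : IsSTS B)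
    {x y z : V} (hxy : x ≠ y) (hxyz : x + y + z = 0) :
    #(B.filter fun b => (b ∩ fiber φ x).Nonempty ∧ (b ∩ fiber φ y).Nonempty ∧
        (b ∩ fiber φ z).Nonempty) = #(fiber φ x) * #(fiber φ y) := by
  refine card_eq_card_mul_card_of_existsUnique (fun p hp q hq => ?_) fun b hb => ?_
  · rw [mem_fiber] at hp hq
    simpa only [mem_filter, and_assoc] using
      hφ.existsUnique_block_meeting_line hB hxyz (by simp) (by simp) hxy hp hq
  · obtain ⟨hb, ⟨p, hp⟩, ⟨q, hq⟩, -⟩ := mem_filter.mp hb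
    have hpx := hp; have hqy := hq
    rw [mem_inter, mem_fiber] at hpx hqy
    exact ⟨hφ.card_inter_fiber_eq_one hB hb ⟨p, hp⟩ fun h =>
        hxy ((mem_fiber.mp (h hqy.1)).symm.trans hqy.2),
      hφ.card_inter_fiber_eq_one hB hb ⟨q, hq⟩ fun h =>
        hxy (hpx.2.symm.trans (mem_fiber.mp (h hpx.1)))⟩

end BlockSums

lemma card_mul_card_fiber_eq_card {α β : Type*} [Fintype α] [Fintype β] [DecidableEq β]
    {f : α → β} (h : ∀ b b', #(fiber f b) = #(fiber f b')) (b : β) :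
    Fintype.card β * #(fiber f b) = Fintype.card α := by
  have hsum : Fintype.card α = ∑ b', #(fiber f b') :=
    card_eq_sum_card_fiberwise (s := univ) (t := univ) fun _ _ => mem_univ _
  simp [hsum, h _ b]

section Balanced

variable {P : Type*} [Fintype P] [DecidableEq P] {B : Finset (Finset P)} {f : P → ZMod 3}

lemma IsSTS.card_fiber_eq_card_fiber_neg_sub (hB : IsSTS B) (hf : SumZeroOnBlocks B f) {p₀ : P}
    {a t : ZMod 3} (hp₀ : f p₀ = a) (ht : t ≠ a) : #(fiber f t) = #(fiber f (-a - t)) := by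
  have hne : ∀ q, f q ≠ a → p₀ ≠ q := fun q hq h => hq (h ▸ hp₀)
  have hta : -a - t ≠ a := by clear hne hp₀; revert a t; decide
  refine card_nbij' (third B p₀) (third B p₀) (fun q hq => ?_) (fun s hs => ?_)
    (fun q hq => hB.third_third (hne q ?_)) (fun s hs => hB.third_third (hne s ?_))
  · rw [mem_coe, mem_fiber] at hq ⊢
    rw [hf.apply_third hB (hne q (hq ▸ ht)), hp₀, hq, neg_add']
  · rw [mem_coe, mem_fiber] at hs ⊢
    rw [hf.apply_third hB (hne s (hs ▸ hta)), hp₀, hs]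
    ring
  · exact (mem_fiber.mp hq).trans_ne ht
  · exact (mem_fiber.mp hs).trans_ne hta

lemma IsSTS.three_mul_card_fiber_eq_card (hB : IsSTS B) (hf : SumZeroOnBlocks B f)
    (hnc : ∃ p q, f p ≠ f q) (c : ZMod 3) : 3 * #(fiber f c) = Fintype.card P := by
  obtain ⟨p, q, hpq⟩ := hnc
  have hcard : ∀ c, #(fiber f c) = #(fiber f (f p)) := by
    have hq := hB.card_fiber_eq_card_fiber_neg_sub hf rfl (Ne.symm hpq)
    have hp := hB.card_fiber_eq_card_fiber_neg_sub hf (rfl : f q = f q) hpq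
    rw [neg_sub_comm] at hp
    intro c
    have hline : ∀ x y z : ZMod 3, x ≠ y → z = x ∨ z = y ∨ z = -x - y := by decide
    rcases hline _ _ c hpq with rfl | rfl | rfl
    exacts [rfl, hq.trans hp.symm, hp.symm]
  simpa using card_mul_card_fiber_eq_card (fun b b' => (hcard b).trans (hcard b').symm) c

end Balanced

section FiniteField

variable {F ι : Type*} [Field F] [Fintype F] [DecidableEq F] [Fintype ι] [DecidableEq ι]

lemma card_mul_card_fiber_dotProduct_eq {y : ι → F} (hy : y ≠ 0) :
    Fintype.card F * #(fiber (· ⬝ᵥ y) 0) = Fintype.card F ^ Fintype.card ι := by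
  let f : (ι → F) →+ F := AddMonoidHom.mk' (· ⬝ᵥ y) fun u v => add_dotProduct u v y
  obtain ⟨j, hj⟩ := Function.ne_iff.mp hy
  have hf : Function.Surjective f := fun c =>
    ⟨Pi.single j (c / y j), by simp [f, div_mul_cancel₀ c hj]⟩
  rw [← Fintype.card_fun]
  exact card_mul_card_fiber_eq_card
    (fun b b' => AddMonoidHom.card_fiber_eq_of_mem_range f (hf b) (hf b')) 0

lemma pow_card_mul_card_fiber_eq_card {P : Type*} [Fintype P] {φ : P → ι → F}
    (hφ : ∀ l ≠ 0, ∀ c, Fintype.card F * #(fiber (fun p => l ⬝ᵥ φ p) c) = Fintype.card P)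
    (x : ι → F) : Fintype.card F ^ Fintype.card ι * #(fiber φ x) = Fintype.card P := by
  set q := Fintype.card F
  set d := Fintype.card ι
  -- count the pairs `(l, p)` with `l ⬝ᵥ φ p = l ⬝ᵥ x` in two ways
  set S := ∑ l : ι → F, #(fiber (fun p => l ⬝ᵥ φ p) (l ⬝ᵥ x))
  have hswap : S = ∑ p, #(fiber (· ⬝ᵥ (φ p - x)) 0) := by
    simp only [S, fiber, card_filter, dotProduct_sub, sub_eq_zero]
    exact sum_comm
  have hbyl : q * S = q * Fintype.card P + (q ^ d - 1) * Fintype.card P := by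
    rw [mul_sum, ← add_sum_erase _ _ (mem_univ 0), sum_congr rfl fun l hl =>
      hφ l (ne_of_mem_erase hl) _, sum_const, card_erase_of_mem (mem_univ _), card_univ,
      Fintype.card_fun, smul_eq_mul]
    simp [fiber, q, d]
  have hbyp : q * S = #(fiber φ x) * (q * q ^ d) + #({p | φ p ≠ x} : Finset P) * q ^ d := by
    rw [hswap, mul_sum]
    have hterm : ∀ p, q * #(fiber (· ⬝ᵥ (φ p - x)) 0) = if φ p = x then q * q ^ d else q ^ d := by
      intro p
      split_ifs with hp
      · simp [fiber, hp, q, d]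
      · exact card_mul_card_fiber_dotProduct_eq (sub_ne_zero.mpr hp)
    simp only [hterm, sum_ite, sum_const, smul_eq_mul]
    rfl
  have hsplit := card_filter_add_card_filter_not (s := univ) (fun p => φ p = x)
  rw [card_univ] at hsplit
  have hq : 1 < q := Fintype.one_lt_card
  have hqd : 1 ≤ q ^ d := Nat.one_le_pow _ _ (by omega)
  have key : ((q : ℤ) - 1) * (q ^ d * #(fiber φ x)) = ((q : ℤ) - 1) * Fintype.card P := by
    have e1 : (q * S : ℤ) = q * Fintype.card P + (q ^ d - 1) * Fintype.card P := by
      exact_mod_cast hbyl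
    have e2 : (q * S : ℤ) = #(fiber φ x) * (q * q ^ d) + #({p | φ p ≠ x} : Finset P) * q ^ d := by
      exact_mod_cast hbyp
    have e3 : (#(fiber φ x) + #({p | φ p ≠ x} : Finset P) : ℤ) = Fintype.card P := by
      exact_mod_cast hsplit
    linear_combination e1 - e2 - (q : ℤ) ^ d * e3
  exact_mod_cast mul_left_cancel₀ (sub_ne_zero.mpr (by exact_mod_cast hq.ne')) key

end FiniteField

lemma exists_linearIndependent_fin_cons {K V : Type*} [DivisionRing K] [AddCommGroup V]
    [Module K V] [Module.Finite K V] {v : V} (hv : v ≠ 0) {n : ℕ} (hn : n < Module.finrank K V) :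
    ∃ g : Fin n → V, LinearIndependent K (Fin.cons v g : Fin (n + 1) → V) := by
  induction n with
  | zero => exact ⟨Fin.elim0, LinearIndependent.of_subsingleton (ι := Fin 1) 0 hv⟩
  | succ n ih =>
    obtain ⟨g, hg⟩ := ih (by omega)
    obtain ⟨x, hx⟩ := exists_linearIndependent_snoc_of_lt_finrank hg hn
    exact ⟨Fin.snoc g x, by rwa [Fin.cons_snoc_eq_snoc_cons]⟩

lemma exists_dotProduct_mem_and_nonconstant {F P : Type*} [Field F] [Fintype P] [Nonempty P]
    {K : Submodule F (P → F)} (hone : (1 : P → F) ∈ K) {m : ℕ} (hm : m < Module.finrank F K) :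
    ∃ φ : P → Fin m → F, (∀ l, (fun p => l ⬝ᵥ φ p) ∈ K) ∧
      ∀ l ≠ 0, ∃ p q, l ⬝ᵥ φ p ≠ l ⬝ᵥ φ q := by
  obtain ⟨g, hg⟩ := exists_linearIndependent_fin_cons (K := F) (v := (⟨1, hone⟩ : K))
    (fun h => one_ne_zero (congrArg Subtype.val h)) hm
  have hcomb : ∀ l : Fin m → F, (fun p => l ⬝ᵥ fun i => (g i : P → F) p) = ↑(∑ i, l i • g i) := by
    intro l
    ext p
    simp [dotProduct, Finset.sum_apply]
  refine ⟨fun p i => (g i : P → F) p, fun l => hcomb l ▸ Submodule.coe_mem _, fun l hl => ?_⟩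
  by_contra! hconst
  obtain ⟨p₀⟩ := ‹Nonempty P›
  have hrel : ∑ j, (Fin.cons (-(l ⬝ᵥ fun i => (g i : P → F) p₀)) l : Fin (m + 1) → F) j •
      (Fin.cons ⟨1, hone⟩ g : Fin (m + 1) → K) j = 0 := by
    ext p
    have h := hconst p p₀
    simp only [dotProduct] at h
    simp [Fin.sum_univ_succ, dotProduct, h]
  exact hl (funext fun i => by simpa using Fintype.linearIndependent_iff.mp hg _ hrel i.succ)

section Incidence

variable {P : Type*} [Fintype P] [DecidableEq P] {B : Finset (Finset P)}

lemma mem_ker_mulVecLin_incMatrix3_iff {f : P → ZMod 3} :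
    f ∈ LinearMap.ker (incMatrix3 B).mulVecLin ↔ SumZeroOnBlocks B f := by
  simp [funext_iff, Matrix.mulVec, dotProduct, incMatrix3, SumZeroOnBlocks]

lemma finrank_ker_mulVecLin_incMatrix3 :
    Module.finrank (ZMod 3) (LinearMap.ker (incMatrix3 B).mulVecLin) =
      Fintype.card P - (incMatrix3 B).rank := by
  have h := LinearMap.finrank_range_add_finrank_ker (incMatrix3 B).mulVecLin
  rw [Module.finrank_fintype_fun_eq_card] at h
  rw [← h, Matrix.rank, Nat.add_sub_cancel_left]

end Incidence

/-- If a Steiner triple system on `3^k` points has 3-rank at most `3^k - r`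
(for `2 ≤ r ≤ k`), then it admits a `(k,r)`-decomposition: the point set splits into
`3^(r-1)` groups of size `T = 3^(k-r+1)` indexed by `(ZMod 3)^(r-1)` such that
(i) the blocks inside each group form an STS with `T(T-1)/6` blocks, (ii) every block not
inside a single group has its three points in three distinct groups indexed by a line
`x + y + z = 0`, and (iii) for each such line the blocks meeting all three of its groups
form a transversal design `TD[3;T]`: there are `T^2` of them and every pair of points
from two different groups of the line lies in exactly one of them. -/
theorem sts_rank_le_decomposition {P : Type*} [Fintype P] [DecidableEq P]
    (k r : ℕ) (hr : 2 ≤ r) (hk : r ≤ k)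
    (hP : Fintype.card P = 3 ^ k) (B : Finset (Finset P)) (hB : IsSTS B)
    (hrank : (incMatrix3 B).rank ≤ 3 ^ k - r) :
    ∃ G : (Fin (r - 1) → ZMod 3) → Finset P,
      -- a partition of the points into groups of size `T`
      (∀ x y, x ≠ y → Disjoint (G x) (G y)) ∧
      (Finset.univ.biUnion G = Finset.univ) ∧
      (∀ x, (G x).card = 3 ^ (k - r + 1)) ∧
      -- (i) the blocks inside a group form a sub-STS with `T(T-1)/6` blocks
      (∀ x, IsSTSOn (G x) (B.filter fun b => b ⊆ G x) ∧
        (B.filter fun b => b ⊆ G x).card =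
          3 ^ (k - r + 1) * (3 ^ (k - r + 1) - 1) / 6) ∧
      -- (ii) every cross block has one point in each of the three groups of a line
      (∀ b ∈ B, (¬ ∃ x, b ⊆ G x) →
        ∃ x y z, x ≠ y ∧ x ≠ z ∧ y ≠ z ∧ x + y + z = 0 ∧
          (b ∩ G x).card = 1 ∧ (b ∩ G y).card = 1 ∧ (b ∩ G z).card = 1) ∧
      -- (iii) the cross blocks of each line form a transversal design `TD[3;T]`
      (∀ x y z, x ≠ y → x ≠ z → y ≠ z → x + y + z = 0 →
        (B.filter fun b =>
            (b ∩ G x).Nonempty ∧ (b ∩ G y).Nonempty ∧ (b ∩ G z).Nonempty).card =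
          (3 ^ (k - r + 1)) ^ 2 ∧
        ∀ u ∈ ({x, y, z} : Finset (Fin (r - 1) → ZMod 3)),
          ∀ v ∈ ({x, y, z} : Finset (Fin (r - 1) → ZMod 3)), u ≠ v →
            ∀ p ∈ G u, ∀ q ∈ G v,
              ∃! b, b ∈ B ∧ (b ∩ G x).Nonempty ∧ (b ∩ G y).Nonempty ∧
                (b ∩ G z).Nonempty ∧ p ∈ b ∧ q ∈ b) := by
  obtain ⟨m, rfl⟩ : ∃ m, r = m + 1 := ⟨r - 1, by omega⟩
  have : Nonempty P := Fintype.card_pos_iff.mp (hP ▸ by positivity)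
  have hdim : m < Module.finrank (ZMod 3) (LinearMap.ker (incMatrix3 B).mulVecLin) := by
    have : m + 1 < 3 ^ k := hk.trans_lt (Nat.lt_pow_self (by norm_num))
    rw [finrank_ker_mulVecLin_incMatrix3, hP]
    omega
  obtain ⟨φ, hφK, hφnc⟩ := exists_dotProduct_mem_and_nonconstant
    (mem_ker_mulVecLin_incMatrix3_iff.mpr hB.sumZeroOnBlocks_one) hdim
  have hφ : SumZeroOnBlocks B φ := fun b hb => funext fun i => by
    simpa [Finset.sum_apply] using mem_ker_mulVecLin_incMatrix3_iff.mp (hφK (Pi.single i 1)) b hb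
  have hcard : ∀ x, #(fiber φ x) = 3 ^ (k - (m + 1) + 1) := by
    intro x
    have h := pow_card_mul_card_fiber_eq_card (fun l hl c => hB.three_mul_card_fiber_eq_card
      (mem_ker_mulVecLin_incMatrix3_iff.mp (hφK l)) (hφnc l hl) c) x
    rw [ZMod.card, Fintype.card_fin, hP, ← pow_mul_pow_sub 3 (by omega : m ≤ k)] at h
    rw [show k - (m + 1) + 1 = k - m by omega]
    exact Nat.eq_of_mul_eq_mul_left (by positivity) h
  have hsub : ∀ x, IsSTSOn (fiber φ x) (B.filter fun b => b ⊆ fiber φ x) := fun x =>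
    hB.isSTSOn_filter_subset fun p hp q hq hpq => hφ.third_mem_fiber hB hp hq hpq
  refine ⟨fiber φ, fun x y hxy => disjoint_filter.mpr fun p _ hx hy => hxy (hx.symm.trans hy),
    eq_univ_of_forall fun p => mem_biUnion.mpr ⟨φ p, mem_univ _, mem_fiber.mpr rfl⟩, hcard,
    fun x => ⟨hsub x, ?_⟩, fun b hb hnot => hφ.exists_line_of_not_subset_fiber hB hb hnot,
    fun x y z hxy _ _ hxyz => ⟨?_, fun u hu v hv huv p hp q hq =>
      hφ.existsUnique_block_meeting_line hB hxyz hu hv huv (mem_fiber.mp hp) (mem_fiber.mp hq)⟩⟩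
  · rw [← hcard x, ← (hsub x).card_mul_six, Nat.mul_div_cancel _ (by norm_num)]
  · rw [hφ.card_blocks_meeting_line hB hxy hxyz, hcard, hcard, sq]
end

section
/- If a Latin square L of order n (n ≥ 1) has an orthogonal mate, then the transversal design associated to L is resolvable into n parallel classes: the collection of the n^2 triples {(0,i), (1,j), (2, L i j)} ⊆ Fin 3 × Fin n (for i, j ∈ Fin n) can be partitioned into n classes, each consisting of n pairwise disjoint triples whose union is all of Fin 3 × Fin n. -/
/-- The transversal design associated to a Latin square `L` of order `n`:
the `n ^ 2` triples `{(0, i), (1, j), (2, L i j)}` on the point set `Fin 3 × Fin n`. -/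
def transversalDesign {n : ℕ} (L : Fin n → Fin n → Fin n) :
    Finset (Finset (Fin 3 × Fin n)) :=
  Finset.image
    (fun p : Fin n × Fin n => ({(0, p.1), (1, p.2), (2, L p.1 p.2)} : Finset (Fin 3 × Fin n)))
    Finset.univ

/-! Colour the block through the cell `(i, j)` by `M i j`. Two distinct blocks of the same colour
are disjoint: they cannot share a row or a column because `M` is Latin, nor a symbol because
`(L, M)` is injective on cells. Each colour occurs once in every row and every column of `M`, and,
by orthogonality, once alongside every symbol of `L`; so each colour class consists of `n` blocks
covering all `3n` points. -/

open Finset Function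

theorem Finpartition.exists_parts_eq_image_fiber {α β γ : Type*} [Fintype α] [Fintype γ]
    [DecidableEq β] [DecidableEq γ] {g : α → β} (hg : Injective g) {f : α → γ}
    (hf : Surjective f) :
    ∃ F : Finpartition (univ.image g), #F.parts = Fintype.card γ ∧
      ∀ C ∈ F.parts, ∃ c, C = ({a | f a = c} : Finset α).image g := by
  set fiber : γ → Finset β := fun c => ({a | f a = c} : Finset α).image g
  have mem_fiber (a : α) (c : γ) : g a ∈ fiber c ↔ f a = c := by
    simp [fiber, hg.eq_iff]
  have fiber_injective : Injective fiber := fun c c' h => by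
    obtain ⟨a, rfl⟩ := hf c
    rw [← mem_fiber, ← h, mem_fiber]
  refine ⟨.ofExistsUnique (univ.image fiber) ?_ ?_ ?_, ?_, ?_⟩
  · simp only [mem_image, mem_univ, true_and, forall_exists_index, forall_apply_eq_imp_iff]
    exact fun c => image_subset_image (subset_univ _)
  · simp only [mem_image, mem_univ, true_and, forall_exists_index, forall_apply_eq_imp_iff]
    intro a
    refine ⟨fiber (f a), ⟨⟨f a, rfl⟩, (mem_fiber a _).2 rfl⟩, ?_⟩
    rintro _ ⟨⟨c, rfl⟩, ha⟩
    rw [(mem_fiber a c).1 ha]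
  · simp only [mem_image, mem_univ, true_and, not_exists]
    intro c hc
    obtain ⟨a, rfl⟩ := hf c
    simpa [hc] using mem_fiber a (f a)
  · simp [card_image_of_injective _ fiber_injective]
  · simp only [Finpartition.ofExistsUnique_parts, mem_image, mem_univ, true_and]
    rintro _ ⟨c, rfl⟩
    exact ⟨c, rfl⟩

theorem card_filter_eq_of_bijective {ι κ γ : Type*} [Fintype ι] [Fintype κ] [DecidableEq γ]
    {M : ι → κ → γ} (hM : ∀ i, Bijective (M i)) (c : γ) :
    #{p : ι × κ | M p.1 p.2 = c} = Fintype.card ι := by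
  have row_fiber (i : ι) : #{j | M i j = c} = 1 := by
    obtain ⟨j, hj, hunique⟩ := (hM i).existsUnique c
    rw [card_eq_one]
    exact ⟨j, by ext; simpa using ⟨hunique _, (· ▸ hj)⟩⟩
  rw [card_filter, Fintype.sum_prod_type]
  simp [row_fiber]

section TransversalDesign

variable {n : ℕ} (L : Fin n → Fin n → Fin n)

def transversalBlock (p : Fin n × Fin n) : Finset (Fin 3 × Fin n) :=
  {(0, p.1), (1, p.2), (2, L p.1 p.2)}

theorem transversalDesign_eq_image : transversalDesign L = univ.image (transversalBlock L) := rfl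

variable {L}

@[simp]
theorem mem_transversalBlock_zero {p : Fin n × Fin n} {k : Fin n} :
    (0, k) ∈ transversalBlock L p ↔ k = p.1 := by
  simp [transversalBlock]

@[simp]
theorem mem_transversalBlock_one {p : Fin n × Fin n} {k : Fin n} :
    (1, k) ∈ transversalBlock L p ↔ k = p.2 := by
  simp [transversalBlock]

@[simp]
theorem mem_transversalBlock_two {p : Fin n × Fin n} {k : Fin n} :
    (2, k) ∈ transversalBlock L p ↔ k = L p.1 p.2 := by
  simp [transversalBlock]

variable (L) in
theorem transversalBlock_injective : Injective (transversalBlock L) := fun p q h => by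
  have h0 : (0, p.1) ∈ transversalBlock L q := h ▸ mem_transversalBlock_zero.2 rfl
  have h1 : (1, p.2) ∈ transversalBlock L q := h ▸ mem_transversalBlock_one.2 rfl
  exact Prod.ext (mem_transversalBlock_zero.1 h0) (mem_transversalBlock_one.1 h1)

variable (L) in
theorem card_transversalDesign : #(transversalDesign L) = n ^ 2 := by
  simp [transversalDesign_eq_image, card_image_of_injective _ (transversalBlock_injective L), sq]

theorem disjoint_transversalBlock {p q : Fin n × Fin n} (h0 : p.1 ≠ q.1) (h1 : p.2 ≠ q.2)
    (h2 : L p.1 p.2 ≠ L q.1 q.2) : Disjoint (transversalBlock L p) (transversalBlock L q) := by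
  rw [disjoint_left]
  rintro ⟨a, k⟩ hp hq
  fin_cases a
  · exact h0 ((mem_transversalBlock_zero.1 hp).symm.trans (mem_transversalBlock_zero.1 hq))
  · exact h1 ((mem_transversalBlock_one.1 hp).symm.trans (mem_transversalBlock_one.1 hq))
  · exact h2 ((mem_transversalBlock_two.1 hp).symm.trans (mem_transversalBlock_two.1 hq))

theorem AreOrthogonal.surjective {M : Fin n → Fin n → Fin n} (h : AreOrthogonal L M) :
    Surjective fun p : Fin n × Fin n => (L p.1 p.2, M p.1 p.2) :=
  Finite.surjective_of_injective h

theorem isParallelClass_image_fiber {M : Fin n → Fin n → Fin n} (hM : IsLatinSquare M)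
    (hLM : AreOrthogonal L M) (c : Fin n) :
    IsParallelClass (({p | M p.1 p.2 = c} : Finset (Fin n × Fin n)).image (transversalBlock L)) := by
  constructor
  · simp only [mem_image, mem_filter, mem_univ, true_and]
    rintro _ ⟨p, hp, rfl⟩ _ ⟨q, hq, rfl⟩ hne
    have hpq : p ≠ q := fun h => hne (h ▸ rfl)
    refine disjoint_transversalBlock (fun h0 => hpq (Prod.ext h0 ?_))
      (fun h1 => hpq (Prod.ext ?_ h1)) (fun h2 => hpq (hLM (Prod.ext h2 (hp.trans hq.symm))))
    · exact (hM.1 p.1).1 (hp.trans (h0 ▸ hq.symm))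
    · exact (hM.2 p.2).1 (hp.trans (h1 ▸ hq.symm))
  · refine eq_univ_iff_forall.2 fun ⟨a, k⟩ => ?_
    simp only [mem_biUnion, mem_image, mem_filter, mem_univ, true_and, id, exists_exists_and_eq_and]
    fin_cases a
    · obtain ⟨j, hj⟩ := (hM.1 k).2 c
      exact ⟨(k, j), hj, by simp⟩
    · obtain ⟨i, hi⟩ := (hM.2 k).2 c
      exact ⟨(i, k), hi, by simp⟩
    · obtain ⟨p, hp⟩ := hLM.surjective (k, c)
      exact ⟨p, congrArg Prod.snd hp, by simpa using (congrArg Prod.fst hp).symm⟩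

end TransversalDesign

theorem transversalDesign_resolvable_of_orthogonal_mate_general {n : ℕ}
    (L : Fin n → Fin n → Fin n)
    (hmate : ∃ M : Fin n → Fin n → Fin n, IsLatinSquare M ∧ AreOrthogonal L M) :
    (transversalDesign L).card = n ^ 2 ∧
      ∃ F : Finpartition (transversalDesign L), F.parts.card = n ∧
        ∀ C ∈ F.parts, C.card = n ∧ IsParallelClass C := by
  obtain ⟨M, hM, hLM⟩ := hmate
  have hM_surjective : Surjective fun p : Fin n × Fin n => M p.1 p.2 := fun c =>
    let ⟨j, hj⟩ := (hM.1 c).2 c; ⟨(c, j), hj⟩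
  obtain ⟨F, hF, hparts⟩ :=
    Finpartition.exists_parts_eq_image_fiber (transversalBlock_injective L) hM_surjective
  refine ⟨card_transversalDesign L, F, by simpa using hF, ?_⟩
  intro C hC
  obtain ⟨c, rfl⟩ := hparts C hC
  refine ⟨?_, isParallelClass_image_fiber hM hLM c⟩
  rw [card_image_of_injective _ (transversalBlock_injective L),
    card_filter_eq_of_bijective hM.1, Fintype.card_fin]

/-- If a Latin square `L` of order `n ≥ 1` has an orthogonal mate, then the transversal
design associated to `L` (which consists of `n ^ 2` triples) can be partitioned into
`n` parallel classes, each consisting of `n` pairwise disjoint triples covering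
`Fin 3 × Fin n`. -/
theorem transversalDesign_resolvable_of_orthogonal_mate {n : ℕ} (hn : 1 ≤ n)
    (L : Fin n → Fin n → Fin n) (hL : IsLatinSquare L)
    (hmate : ∃ M : Fin n → Fin n → Fin n, IsLatinSquare M ∧ AreOrthogonal L M) :
    (transversalDesign L).card = n ^ 2 ∧
      ∃ F : Finpartition (transversalDesign L), F.parts.card = n ∧
        ∀ C ∈ F.parts, C.card = n ∧ IsParallelClass C :=
  transversalDesign_resolvable_of_orthogonal_mate_general L hmate
end
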